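/- arXiv:2204.06612 — 9 statements merged into one kernel-verified Lean document; each statement's English description precedes it below -/
import Mathlib

section
/- Let α = (α₁,α₂,α₃) ∈ ℂ³ and β = (β₁,β₂,β₃) ∈ ℂ³ both satisfy the triangle inequality. Then there exists an automorphism φ of the tridisc 𝔻³, i.e. a bijective holomorphic map φ : 𝔻³ → 𝔻³ whose inverse is also holomorphic, such that φ(M_α) = M_β. -/
/-!
Every `M_α` with `α` satisfying the triangle inequality is carried onto `M_(1,1,1)` by an
automorphism of `𝔻³` acting coordinatewise; since automorphisms compose and invert, this suffices.

Writing `αᵢ = |αᵢ| uᵢ` with `|uᵢ| = 1`, the rotation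
`z ↦ (conj(u₂u₃) z₁, conj(u₁u₃) z₂, conj(u₁u₂) z₃)` pulls the defining polynomial of `M_(|α₁|,|α₂|,|α₃|)` back to `conj(u₁u₂u₃)` times that of `M_α`.

For a real triple `r` satisfying the triangle inequality, the Möbius map
`z ↦ ((zᵢ - Aᵢ) / (1 - Aᵢ zᵢ))ᵢ` with real `Aᵢ ∈ (-1, 1)` pulls the defining polynomial of
`M_(1,1,1)` back to `T / ∏ (1 - Aᵢ zᵢ)` times that of `M_r` as soon as four polynomial equations
in the `Aᵢ` and `T ≠ 0` hold (one for the coefficients of `1` and `z₁z₂z₃`, one for each pair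
`zᵢ`, `zⱼzₖ`). With `sᵢ = rⱼ + rₖ - rᵢ > 0` and `l² = 3 s₁s₂s₃ / (s₁ + s₂ + s₃)` they are solved by
`Aᵢ = (sᵢ - l) / (sᵢ + l)` and `T = 8 l² / ∏ (sᵢ + l)`.
-/

open Complex Set

/-- The open unit tridisc in `ℂ³`. -/
def triDisc : Set (ℂ × ℂ × ℂ) :=
  {z | ‖z.1‖ < 1 ∧ ‖z.2.1‖ < 1 ∧ ‖z.2.2‖ < 1}

/-- The variety `M_α ⊆ 𝔻³`. -/
def Mvar (a : ℂ × ℂ × ℂ) : Set (ℂ × ℂ × ℂ) :=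
  {z | z ∈ triDisc ∧
    a.1 * z.1 + a.2.1 * z.2.1 + a.2.2 * z.2.2 =
      (starRingEnd ℂ) a.1 * z.2.1 * z.2.2 + (starRingEnd ℂ) a.2.1 * z.1 * z.2.2 +
        (starRingEnd ℂ) a.2.2 * z.1 * z.2.1}

/-- A triple `α ∈ ℂ³` satisfies the triangle inequality. -/
def TriangleIneq (a : ℂ × ℂ × ℂ) : Prop :=
  ‖a.2.2‖ < ‖a.1‖ + ‖a.2.1‖ ∧
  ‖a.1‖ < ‖a.2.1‖ + ‖a.2.2‖ ∧
  ‖a.2.1‖ < ‖a.1‖ + ‖a.2.2‖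

open ComplexConjugate Metric

noncomputable section

theorem mem_triDisc_iff {z : ℂ × ℂ × ℂ} :
    z ∈ triDisc ↔ z.1 ∈ ball (0 : ℂ) 1 ∧ z.2.1 ∈ ball (0 : ℂ) 1 ∧ z.2.2 ∈ ball (0 : ℂ) 1 := by
  simp only [mem_ball_zero_iff]
  rfl

theorem mapsTo_triDisc_prod3 {f g h : ℂ → ℂ} (hf : MapsTo f (ball 0 1) (ball 0 1))
    (hg : MapsTo g (ball 0 1) (ball 0 1)) (hh : MapsTo h (ball 0 1) (ball 0 1)) :
    MapsTo (fun z : ℂ × ℂ × ℂ => (f z.1, g z.2.1, h z.2.2)) triDisc triDisc := by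
  intro z hz
  rw [mem_triDisc_iff] at hz ⊢
  exact ⟨hf hz.1, hg hz.2.1, hh hz.2.2⟩

theorem differentiableOn_triDisc_prod3 {f g h : ℂ → ℂ} (hf : DifferentiableOn ℂ f (ball 0 1))
    (hg : DifferentiableOn ℂ g (ball 0 1)) (hh : DifferentiableOn ℂ h (ball 0 1)) :
    DifferentiableOn ℂ (fun z : ℂ × ℂ × ℂ => (f z.1, g z.2.1, h z.2.2)) triDisc := by
  have h₁ : MapsTo (fun z : ℂ × ℂ × ℂ => z.1) triDisc (ball 0 1) :=
    fun z hz => (mem_triDisc_iff.1 hz).1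
  have h₂ : MapsTo (fun z : ℂ × ℂ × ℂ => z.2.1) triDisc (ball 0 1) :=
    fun z hz => (mem_triDisc_iff.1 hz).2.1
  have h₃ : MapsTo (fun z : ℂ × ℂ × ℂ => z.2.2) triDisc (ball 0 1) :=
    fun z hz => (mem_triDisc_iff.1 hz).2.2
  exact (hf.comp differentiableOn_fst h₁).prodMk
    ((hg.comp (differentiableOn_fst.comp differentiableOn_snd (mapsTo_univ _ _)) h₂).prodMk
      (hh.comp (differentiableOn_snd.comp differentiableOn_snd (mapsTo_univ _ _)) h₃))

def blaschke (a z : ℂ) : ℂ := (z - a) / (1 - conj a * z)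

theorem one_sub_conj_mul_ne_zero {a z : ℂ} (ha : ‖a‖ < 1) (hz : ‖z‖ < 1) :
    1 - conj a * z ≠ 0 := by
  intro h
  have : ‖conj a * z‖ < 1 := by
    rw [norm_mul, norm_conj]
    nlinarith [norm_nonneg a, norm_nonneg z]
  rw [← sub_eq_zero.1 h, norm_one] at this
  exact this.false

theorem normSq_one_sub_conj_mul_sub_normSq_sub (a z : ℂ) :
    normSq (1 - conj a * z) - normSq (z - a) = (1 - normSq a) * (1 - normSq z) := by
  apply ofReal_injective
  push_cast
  simp only [normSq_eq_conj_mul_self, map_sub, map_mul, map_one, conj_conj]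
  ring

theorem norm_blaschke_lt_one {a z : ℂ} (ha : ‖a‖ < 1) (hz : ‖z‖ < 1) : ‖blaschke a z‖ < 1 := by
  have hd := one_sub_conj_mul_ne_zero ha hz
  rw [blaschke, norm_div, div_lt_one (norm_pos_iff.2 hd),
    ← sq_lt_sq₀ (norm_nonneg _) (norm_nonneg _), ← normSq_eq_norm_sq, ← normSq_eq_norm_sq,
    ← sub_pos, normSq_one_sub_conj_mul_sub_normSq_sub]
  have ha' : normSq a < 1 := by rw [normSq_eq_norm_sq]; nlinarith [norm_nonneg a]
  have hz' : normSq z < 1 := by rw [normSq_eq_norm_sq]; nlinarith [norm_nonneg z]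
  exact mul_pos (sub_pos.2 ha') (sub_pos.2 hz')

theorem blaschke_neg_blaschke {a z : ℂ} (ha : ‖a‖ < 1) (hz : ‖z‖ < 1) :
    blaschke (-a) (blaschke a z) = z := by
  have hd := one_sub_conj_mul_ne_zero ha hz
  have ha' := one_sub_conj_mul_ne_zero ha ha
  have hnum : blaschke a z - -a = z * (1 - conj a * a) / (1 - conj a * z) := by
    rw [blaschke, eq_div_iff hd, sub_mul, div_mul_cancel₀ _ hd]
    ring
  have hden : 1 - conj (-a) * blaschke a z = (1 - conj a * a) / (1 - conj a * z) := by
    rw [blaschke, eq_div_iff hd, map_neg, sub_mul, neg_mul, neg_mul, mul_assoc,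
      div_mul_cancel₀ _ hd]
    ring
  rw [blaschke, hnum, hden, div_div_div_cancel_right₀ hd, mul_div_cancel_right₀ _ ha']

theorem differentiableOn_blaschke {a : ℂ} (ha : ‖a‖ < 1) :
    DifferentiableOn ℂ (blaschke a) (ball 0 1) :=
  (differentiableOn_id.sub_const a).div
    ((differentiableOn_const 1).sub ((differentiableOn_const _).mul differentiableOn_id))
    fun _ hz => one_sub_conj_mul_ne_zero ha (mem_ball_zero_iff.1 hz)

theorem mapsTo_blaschke {a : ℂ} (ha : ‖a‖ < 1) : MapsTo (blaschke a) (ball 0 1) (ball 0 1) :=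
  fun _ hz => mem_ball_zero_iff.2 (norm_blaschke_lt_one ha (mem_ball_zero_iff.1 hz))

structure HolAut {E : Type*} [NormedAddCommGroup E] [NormedSpace ℂ E] (U : Set E) where
  toFun : E → E
  invFun : E → E
  mapsTo_toFun : MapsTo toFun U U
  mapsTo_invFun : MapsTo invFun U U
  left_inv : LeftInvOn invFun toFun U
  right_inv : RightInvOn invFun toFun U
  differentiableOn_toFun : DifferentiableOn ℂ toFun U
  differentiableOn_invFun : DifferentiableOn ℂ invFun U

namespace HolAut

variable {E : Type*} [NormedAddCommGroup E] [NormedSpace ℂ E] {U : Set E}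

instance : CoeFun (HolAut U) fun _ => E → E := ⟨toFun⟩

def symm (f : HolAut U) : HolAut U where
  toFun := f.invFun
  invFun := f.toFun
  mapsTo_toFun := f.mapsTo_invFun
  mapsTo_invFun := f.mapsTo_toFun
  left_inv := f.right_inv
  right_inv := f.left_inv
  differentiableOn_toFun := f.differentiableOn_invFun
  differentiableOn_invFun := f.differentiableOn_toFun

def trans (f g : HolAut U) : HolAut U where
  toFun := g ∘ f
  invFun := f.invFun ∘ g.invFun
  mapsTo_toFun := g.mapsTo_toFun.comp f.mapsTo_toFun
  mapsTo_invFun := f.mapsTo_invFun.comp g.mapsTo_invFun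
  left_inv := f.left_inv.comp g.left_inv f.mapsTo_toFun
  right_inv := f.right_inv.comp g.right_inv g.mapsTo_invFun
  differentiableOn_toFun := g.differentiableOn_toFun.comp f.differentiableOn_toFun f.mapsTo_toFun
  differentiableOn_invFun :=
    f.differentiableOn_invFun.comp g.differentiableOn_invFun g.mapsTo_invFun

theorem image_trans (f g : HolAut U) (A : Set E) : f.trans g '' A = g '' (f '' A) :=
  image_comp g f A

theorem symm_image_image (f : HolAut U) {A : Set E} (hA : A ⊆ U) : f.symm '' (f '' A) = A :=
  f.left_inv.image_image' hA

theorem image_sep_eq_sep (f : HolAut U) {P Q : E → Prop} (h : ∀ z ∈ U, Q (f z) ↔ P z) :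
    f '' {z ∈ U | P z} = {z ∈ U | Q z} := by
  ext w
  constructor
  · rintro ⟨z, ⟨hz, hPz⟩, rfl⟩
    exact ⟨f.mapsTo_toFun hz, (h z hz).2 hPz⟩
  · rintro ⟨hw, hQw⟩
    have hz := f.mapsTo_invFun hw
    refine ⟨f.invFun w, ⟨hz, (h _ hz).1 ?_⟩, f.right_inv hw⟩
    rwa [f.right_inv hw]

def prod3 (f g h : HolAut (ball (0 : ℂ) 1)) : HolAut triDisc where
  toFun z := (f z.1, g z.2.1, h z.2.2)
  invFun z := (f.invFun z.1, g.invFun z.2.1, h.invFun z.2.2)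
  mapsTo_toFun := mapsTo_triDisc_prod3 f.mapsTo_toFun g.mapsTo_toFun h.mapsTo_toFun
  mapsTo_invFun := mapsTo_triDisc_prod3 f.mapsTo_invFun g.mapsTo_invFun h.mapsTo_invFun
  left_inv z hz := by
    rw [mem_triDisc_iff] at hz
    exact Prod.ext (f.left_inv hz.1) (Prod.ext (g.left_inv hz.2.1) (h.left_inv hz.2.2))
  right_inv z hz := by
    rw [mem_triDisc_iff] at hz
    exact Prod.ext (f.right_inv hz.1) (Prod.ext (g.right_inv hz.2.1) (h.right_inv hz.2.2))
  differentiableOn_toFun := differentiableOn_triDisc_prod3 f.differentiableOn_toFun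
    g.differentiableOn_toFun h.differentiableOn_toFun
  differentiableOn_invFun := differentiableOn_triDisc_prod3 f.differentiableOn_invFun
    g.differentiableOn_invFun h.differentiableOn_invFun

def ofBlaschke (a : ℂ) (ha : ‖a‖ < 1) : HolAut (ball (0 : ℂ) 1) where
  toFun := blaschke a
  invFun := blaschke (-a)
  mapsTo_toFun := mapsTo_blaschke ha
  mapsTo_invFun := mapsTo_blaschke (by rwa [norm_neg])
  left_inv _ hz := blaschke_neg_blaschke ha (mem_ball_zero_iff.1 hz)
  right_inv z hz := by
    simpa using blaschke_neg_blaschke (a := -a) (by rwa [norm_neg]) (mem_ball_zero_iff.1 hz)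
  differentiableOn_toFun := differentiableOn_blaschke ha
  differentiableOn_invFun := differentiableOn_blaschke (by rwa [norm_neg])

def rotation (w : ℂ) (hw : ‖w‖ = 1) : HolAut (ball (0 : ℂ) 1) where
  toFun z := w * z
  invFun z := conj w * z
  mapsTo_toFun z hz := by simpa [hw] using hz
  mapsTo_invFun z hz := by simpa [hw] using hz
  left_inv z _ := show conj w * (w * z) = z by rw [← mul_assoc, conj_mul', hw]; simp
  right_inv z _ := show w * (conj w * z) = z by rw [← mul_assoc, mul_conj', hw]; simp
  differentiableOn_toFun := (differentiableOn_const w).mul differentiableOn_id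
  differentiableOn_invFun := (differentiableOn_const _).mul differentiableOn_id

end HolAut

def mvarPoly (a z : ℂ × ℂ × ℂ) : ℂ :=
  a.1 * z.1 + a.2.1 * z.2.1 + a.2.2 * z.2.2 -
    (conj a.1 * z.2.1 * z.2.2 + conj a.2.1 * z.1 * z.2.2 + conj a.2.2 * z.1 * z.2.1)

theorem Mvar_eq_sep (a : ℂ × ℂ × ℂ) : Mvar a = {z ∈ triDisc | mvarPoly a z = 0} := by
  ext z
  simp only [Mvar, mvarPoly, sub_eq_zero]

theorem HolAut.image_Mvar_eq {f : HolAut triDisc} {a b : ℂ × ℂ × ℂ} (c : ℂ × ℂ × ℂ → ℂ)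
    (hc : ∀ z ∈ triDisc, c z ≠ 0) (h : ∀ z ∈ triDisc, mvarPoly b (f z) = c z * mvarPoly a z) :
    f '' Mvar a = Mvar b := by
  rw [Mvar_eq_sep, Mvar_eq_sep]
  exact f.image_sep_eq_sep fun z hz => by rw [h z hz, mul_eq_zero_iff_left (hc z hz)]

theorem mvarPoly_rotate (r₁ r₂ r₃ : ℝ) {u₁ u₂ u₃ : ℂ} (h₁ : conj u₁ * u₁ = 1)
    (h₂ : conj u₂ * u₂ = 1) (h₃ : conj u₃ * u₃ = 1) (z : ℂ × ℂ × ℂ) :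
    mvarPoly (r₁, r₂, r₃) (conj (u₂ * u₃) * z.1, conj (u₁ * u₃) * z.2.1, conj (u₁ * u₂) * z.2.2) =
      conj (u₁ * u₂ * u₃) * mvarPoly (r₁ * u₁, r₂ * u₂, r₃ * u₃) z := by
  simp only [mvarPoly, map_mul, conj_ofReal]
  linear_combination -(r₁ : ℂ) * conj u₂ * conj u₃ * z.1 * h₁
    - (r₂ : ℂ) * conj u₁ * conj u₃ * z.2.1 * h₂ - (r₃ : ℂ) * conj u₁ * conj u₂ * z.2.2 * h₃

theorem exists_unit_eq_norm_mul (x : ℂ) : ∃ u : ℂ, ‖u‖ = 1 ∧ x = ‖x‖ * u :=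
  ⟨exp (arg x * I), norm_exp_ofReal_mul_I _, (norm_mul_exp_arg_mul_I x).symm⟩

theorem exists_holAut_image_Mvar_eq_norm (α : ℂ × ℂ × ℂ) :
    ∃ f : HolAut triDisc, f '' Mvar α = Mvar (‖α.1‖, ‖α.2.1‖, ‖α.2.2‖) := by
  obtain ⟨u₁, hu₁, hα₁⟩ := exists_unit_eq_norm_mul α.1
  obtain ⟨u₂, hu₂, hα₂⟩ := exists_unit_eq_norm_mul α.2.1
  obtain ⟨u₃, hu₃, hα₃⟩ := exists_unit_eq_norm_mul α.2.2
  have hconj : ∀ {u : ℂ}, ‖u‖ = 1 → conj u * u = 1 := fun hu => by rw [conj_mul', hu]; simp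
  have hnorm : ∀ {u v : ℂ}, ‖u‖ = 1 → ‖v‖ = 1 → ‖conj (u * v)‖ = 1 := fun hu hv => by
    rw [norm_conj, norm_mul, hu, hv, one_mul]
  refine ⟨.prod3 (.rotation _ (hnorm hu₂ hu₃)) (.rotation _ (hnorm hu₁ hu₃))
    (.rotation _ (hnorm hu₁ hu₂)), HolAut.image_Mvar_eq (fun _ => conj (u₁ * u₂ * u₃))
    (fun _ _ => by simp [hu₁, hu₂, hu₃, ← norm_ne_zero_iff]) fun z _ => ?_⟩
  conv_rhs => rw [show α = (‖α.1‖ * u₁, ‖α.2.1‖ * u₂, ‖α.2.2‖ * u₃) from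
    Prod.ext hα₁ (Prod.ext hα₂ hα₃)]
  exact mvarPoly_rotate _ _ _ (hconj hu₁) (hconj hu₂) (hconj hu₃) z

section Moebius

variable {A₁ A₂ A₃ T r₁ r₂ r₃ : ℝ}

theorem mvarPoly_one_blaschke (h₀ : A₁ + A₂ + A₃ + A₁ * A₂ + A₁ * A₃ + A₂ * A₃ = 0)
    (h₁ : 1 + A₁ * A₂ * A₃ + A₁ * A₂ + A₁ * A₃ + A₂ + A₃ = T * r₁)
    (h₂ : 1 + A₁ * A₂ * A₃ + A₁ * A₂ + A₂ * A₃ + A₁ + A₃ = T * r₂)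
    (h₃ : 1 + A₁ * A₂ * A₃ + A₁ * A₃ + A₂ * A₃ + A₁ + A₂ = T * r₃) {z₁ z₂ z₃ : ℂ}
    (hz₁ : 1 - A₁ * z₁ ≠ 0) (hz₂ : 1 - A₂ * z₂ ≠ 0) (hz₃ : 1 - A₃ * z₃ ≠ 0) :
    mvarPoly (1, 1, 1) (blaschke A₁ z₁, blaschke A₂ z₂, blaschke A₃ z₃) =
      T / ((1 - A₁ * z₁) * (1 - A₂ * z₂) * (1 - A₃ * z₃)) * mvarPoly (r₁, r₂, r₃) (z₁, z₂, z₃) := by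
  rw [mul_comm] at hz₁ hz₂ hz₃
  have c₀ := congrArg ofReal h₀
  have c₁ := congrArg ofReal h₁
  have c₂ := congrArg ofReal h₂
  have c₃ := congrArg ofReal h₃
  push_cast at c₀ c₁ c₂ c₃
  simp only [mvarPoly, blaschke, map_one, one_mul, conj_ofReal]
  field_simp
  linear_combination (z₁ * z₂ * z₃ - 1) * c₀ + (z₁ - z₂ * z₃) * c₁ + (z₂ - z₁ * z₃) * c₂
    + (z₃ - z₁ * z₂) * c₃

theorem abs_sub_div_add_lt_one {s l : ℝ} (hs : 0 < s) (hl : 0 < l) : |(s - l) / (s + l)| < 1 := by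
  rw [abs_div, abs_of_pos (by linarith : 0 < s + l), div_lt_one (by linarith), abs_lt]
  constructor <;> linarith

theorem exists_blaschke_params (h₁ : r₁ < r₂ + r₃) (h₂ : r₂ < r₁ + r₃) (h₃ : r₃ < r₁ + r₂) :
    ∃ A₁ A₂ A₃ T : ℝ, |A₁| < 1 ∧ |A₂| < 1 ∧ |A₃| < 1 ∧ T ≠ 0 ∧
      A₁ + A₂ + A₃ + A₁ * A₂ + A₁ * A₃ + A₂ * A₃ = 0 ∧
      1 + A₁ * A₂ * A₃ + A₁ * A₂ + A₁ * A₃ + A₂ + A₃ = T * r₁ ∧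
      1 + A₁ * A₂ * A₃ + A₁ * A₂ + A₂ * A₃ + A₁ + A₃ = T * r₂ ∧
      1 + A₁ * A₂ * A₃ + A₁ * A₃ + A₂ * A₃ + A₁ + A₂ = T * r₃ := by
  set s₁ := r₂ + r₃ - r₁
  set s₂ := r₁ + r₃ - r₂
  set s₃ := r₁ + r₂ - r₃
  have hs₁ : 0 < s₁ := by linarith
  have hs₂ : 0 < s₂ := by linarith
  have hs₃ : 0 < s₃ := by linarith
  obtain ⟨l, hl, hl₂⟩ : ∃ l : ℝ, 0 < l ∧ l ^ 2 * (s₁ + s₂ + s₃) = 3 * (s₁ * s₂ * s₃) := by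
    refine ⟨√(3 * (s₁ * s₂ * s₃) / (s₁ + s₂ + s₃)), by positivity, ?_⟩
    rw [Real.sq_sqrt (by positivity), div_mul_cancel₀ _ (by positivity)]
  have d₁ : s₁ + l ≠ 0 := by positivity
  have d₂ : s₂ + l ≠ 0 := by positivity
  have d₃ : s₃ + l ≠ 0 := by positivity
  refine ⟨(s₁ - l) / (s₁ + l), (s₂ - l) / (s₂ + l), (s₃ - l) / (s₃ + l),
    8 * l ^ 2 / ((s₁ + l) * (s₂ + l) * (s₃ + l)), abs_sub_div_add_lt_one hs₁ hl,
    abs_sub_div_add_lt_one hs₂ hl, abs_sub_div_add_lt_one hs₃ hl, by positivity, ?_, ?_, ?_, ?_⟩ <;>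
  · field_simp
    linear_combination (-2) * hl₂

theorem exists_holAut_image_Mvar_real_eq_one (h₁ : r₁ < r₂ + r₃) (h₂ : r₂ < r₁ + r₃)
    (h₃ : r₃ < r₁ + r₂) : ∃ f : HolAut triDisc, f '' Mvar (r₁, r₂, r₃) = Mvar (1, 1, 1) := by
  obtain ⟨A₁, A₂, A₃, T, hA₁, hA₂, hA₃, hT, c₀, c₁, c₂, c₃⟩ := exists_blaschke_params h₁ h₂ h₃
  have hA : ∀ {A : ℝ}, |A| < 1 → ‖(A : ℂ)‖ < 1 := by simp
  have hden : ∀ {A : ℝ} {z : ℂ}, |A| < 1 → ‖z‖ < 1 → 1 - (A : ℂ) * z ≠ 0 := fun hA' hz => by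
    simpa using one_sub_conj_mul_ne_zero (hA hA') hz
  refine ⟨.prod3 (.ofBlaschke A₁ (hA hA₁)) (.ofBlaschke A₂ (hA hA₂)) (.ofBlaschke A₃ (hA hA₃)),
    HolAut.image_Mvar_eq (fun z => T / ((1 - A₁ * z.1) * (1 - A₂ * z.2.1) * (1 - A₃ * z.2.2)))
      (fun z hz => ?_) fun z hz => ?_⟩
  · exact div_ne_zero (ofReal_ne_zero.2 hT)
      (mul_ne_zero (mul_ne_zero (hden hA₁ hz.1) (hden hA₂ hz.2.1)) (hden hA₃ hz.2.2))
  · exact mvarPoly_one_blaschke c₀ c₁ c₂ c₃ (hden hA₁ hz.1) (hden hA₂ hz.2.1) (hden hA₃ hz.2.2)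

end Moebius

theorem exists_holAut_image_Mvar_eq_one {α : ℂ × ℂ × ℂ} (hα : TriangleIneq α) :
    ∃ f : HolAut triDisc, f '' Mvar α = Mvar (1, 1, 1) := by
  obtain ⟨f, hf⟩ := exists_holAut_image_Mvar_eq_norm α
  obtain ⟨h₃, h₁, h₂⟩ := hα
  obtain ⟨g, hg⟩ := exists_holAut_image_Mvar_real_eq_one h₁ h₂ h₃
  exact ⟨f.trans g, by rw [HolAut.image_trans, hf, hg]⟩

theorem biholomorphic_equivalence_of_M_alpha
    (α β : ℂ × ℂ × ℂ) (hα : TriangleIneq α) (hβ : TriangleIneq β) :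
    ∃ φ ψ : (ℂ × ℂ × ℂ) → (ℂ × ℂ × ℂ),
      DifferentiableOn ℂ φ triDisc ∧ DifferentiableOn ℂ ψ triDisc ∧
      Set.MapsTo φ triDisc triDisc ∧ Set.MapsTo ψ triDisc triDisc ∧
      (∀ z ∈ triDisc, ψ (φ z) = z) ∧ (∀ z ∈ triDisc, φ (ψ z) = z) ∧
      φ '' Mvar α = Mvar β := by
  obtain ⟨f, hf⟩ := exists_holAut_image_Mvar_eq_one hα
  obtain ⟨g, hg⟩ := exists_holAut_image_Mvar_eq_one hβ
  let h := f.trans g.symm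
  refine ⟨h, h.invFun, h.differentiableOn_toFun, h.differentiableOn_invFun, h.mapsTo_toFun,
    h.mapsTo_invFun, h.left_inv, h.right_inv, ?_⟩
  rw [HolAut.image_trans, hf, ← hg, g.symm_image_image fun _ hz => hz.1]
end
end

section
/- For every (λ,μ) ∈ V the denominator 1+2(λ+μ)(λμ−1)−λ²μ² is nonzero (indeed positive), and moreover 𝒜(λ,μ) + ℬ(λ,μ) = (λ+μ−2λμ−2)/(2λ+2μ−λμ−1) and 𝒜(λ,μ) − ℬ(λ,μ) = (λ−μ)/(1−λμ), where in addition 2λ+2μ−λμ−1 ≠ 0 and 1−λμ ≠ 0 on V. -/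
open Set

/-- The parameter set `V ⊆ ℝ²`. -/
def Vset : Set (ℝ × ℝ) :=
  {p | -1 < p.1 ∧ p.1 < 1 ∧ -1 < p.2 ∧ p.2 < 1 ∧ p.1 + p.2 ≠ 1 ∧
    |(p.1 + p.2 - p.1 * p.2) / (p.1 + p.2 - 1)| < 1}

/-- `𝒜(λ,μ)`. -/
noncomputable def calA (l m : ℝ) : ℝ :=
  (1 - l ^ 2) * (m ^ 2 - m + 1) / (1 + 2 * (l + m) * (l * m - 1) - l ^ 2 * m ^ 2)

/-- `ℬ(λ,μ)`. -/
noncomputable def calB (l m : ℝ) : ℝ :=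
  (1 - m ^ 2) * (l ^ 2 - l + 1) / (1 + 2 * (l + m) * (l * m - 1) - l ^ 2 * m ^ 2)

/-!
The common denominator `D` of `𝒜` and `ℬ` is both a difference of squares,
`D = (λ+μ-1)² - (λ+μ-λμ)²`, and a product, `D = -(1-λμ)(2λ+2μ-λμ-1)`.
The first form shows that the defining inequality of `V` says exactly `D > 0`; since `λμ < 1`
on `(-1,1)²`, the second form then gives `2λ+2μ-λμ-1 < 0`.
-/

theorem mul_lt_one_of_abs_lt_one {a b : ℝ} (ha : |a| < 1) (hb : |b| < 1) : a * b < 1 :=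
  (le_abs_self _).trans_lt <|
    abs_mul a b ▸ mul_lt_one_of_nonneg_of_lt_one_left (abs_nonneg a) ha hb.le

theorem calA_denom_eq_sq_sub_sq (l m : ℝ) :
    1 + 2 * (l + m) * (l * m - 1) - l ^ 2 * m ^ 2 = (l + m - 1) ^ 2 - (l + m - l * m) ^ 2 := by
  ring

theorem calA_denom_eq_neg_mul (l m : ℝ) :
    1 + 2 * (l + m) * (l * m - 1) - l ^ 2 * m ^ 2 =
      -((1 - l * m) * (2 * l + 2 * m - l * m - 1)) := by
  ring

theorem calA_denom_pos_of_mem_Vset {l m : ℝ} (hV : (l, m) ∈ Vset) :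
    0 < 1 + 2 * (l + m) * (l * m - 1) - l ^ 2 * m ^ 2 := by
  obtain ⟨-, -, -, -, hs, hlt⟩ := hV
  rw [abs_div, div_lt_one (abs_pos.2 (sub_ne_zero.2 hs))] at hlt
  rw [calA_denom_eq_sq_sub_sq, sub_pos]
  exact sq_lt_sq.2 hlt

theorem mul_lt_one_of_mem_Vset {l m : ℝ} (hV : (l, m) ∈ Vset) : l * m < 1 :=
  mul_lt_one_of_abs_lt_one (abs_lt.2 ⟨hV.1, hV.2.1⟩) (abs_lt.2 ⟨hV.2.2.1, hV.2.2.2.1⟩)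

theorem two_mul_add_two_mul_sub_mul_sub_one_neg_of_mem_Vset {l m : ℝ} (hV : (l, m) ∈ Vset) :
    2 * l + 2 * m - l * m - 1 < 0 := by
  have hD := calA_denom_pos_of_mem_Vset hV
  rw [calA_denom_eq_neg_mul, neg_pos] at hD
  exact neg_of_mul_neg_right hD (sub_pos.2 (mul_lt_one_of_mem_Vset hV)).le

section Identities

variable {l m : ℝ}

theorem calA_denom_ne_zero (hp : 1 - l * m ≠ 0) (hq : 2 * l + 2 * m - l * m - 1 ≠ 0) :
    1 + 2 * (l + m) * (l * m - 1) - l ^ 2 * m ^ 2 ≠ 0 := by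
  rw [calA_denom_eq_neg_mul]
  exact neg_ne_zero.2 (mul_ne_zero hp hq)

theorem calA_add_calB (hp : 1 - l * m ≠ 0) (hq : 2 * l + 2 * m - l * m - 1 ≠ 0) :
    calA l m + calB l m = (l + m - 2 * l * m - 2) / (2 * l + 2 * m - l * m - 1) := by
  rw [calA, calB, ← add_div, div_eq_div_iff (calA_denom_ne_zero hp hq) hq]
  ring

theorem calA_sub_calB (hp : 1 - l * m ≠ 0) (hq : 2 * l + 2 * m - l * m - 1 ≠ 0) :
    calA l m - calB l m = (l - m) / (1 - l * m) := by
  rw [calA, calB, ← sub_div, div_eq_div_iff (calA_denom_ne_zero hp hq) hp]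
  ring

end Identities

theorem calA_calB_sum_and_difference (l m : ℝ) (hV : (l, m) ∈ Vset) :
    0 < 1 + 2 * (l + m) * (l * m - 1) - l ^ 2 * m ^ 2 ∧
    2 * l + 2 * m - l * m - 1 ≠ 0 ∧
    1 - l * m ≠ 0 ∧
    calA l m + calB l m = (l + m - 2 * l * m - 2) / (2 * l + 2 * m - l * m - 1) ∧
    calA l m - calB l m = (l - m) / (1 - l * m) := by
  have hp : 1 - l * m ≠ 0 := (sub_pos.2 (mul_lt_one_of_mem_Vset hV)).ne'
  have hq := (two_mul_add_two_mul_sub_mul_sub_one_neg_of_mem_Vset hV).ne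
  exact ⟨calA_denom_pos_of_mem_Vset hV, hq, hp, calA_add_calB hp hq, calA_sub_calB hp hq⟩
end

section
/- The map Ψ : V → ℝ², Ψ(λ,μ) = (𝒜(λ,μ), ℬ(λ,μ)), is differentiable on the open set V and at every point of V its derivative (Jacobian) is an invertible linear map from ℝ² to ℝ²; in particular Ψ is a local diffeomorphism and an open map on V. -/
open Set

/-- The map `Ψ(λ,μ) = (𝒜(λ,μ), ℬ(λ,μ))`. -/
noncomputable def Psi (p : ℝ × ℝ) : ℝ × ℝ := (calA p.1 p.2, calB p.1 p.2)

/-!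
The common denominator `D` of `𝒜` and `ℬ` equals `(λ+μ-1)² - (λ+μ-λμ)²`, so the last condition
defining `V` says exactly that `D > 0` there; in particular `Ψ` is smooth on `V`. Its Jacobian
determinant is `3 (1-λ²)(1-μ²) / D²`, positive on `V` since `|λ|, |μ| < 1`. The inverse function
theorem then makes `Ψ` a local diffeomorphism, hence open, on `V`.
-/

theorem HasFDerivAt.div {𝕜 E : Type*} [NontriviallyNormedField 𝕜] [NormedAddCommGroup E]
    [NormedSpace 𝕜 E] {c d : E → 𝕜} {c' d' : E →L[𝕜] 𝕜} {x : E} (hc : HasFDerivAt c c' x)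
    (hd : HasFDerivAt d d' x) (hx : d x ≠ 0) :
    HasFDerivAt (fun y => c y / d y) ((d x ^ 2)⁻¹ • (d x • c' - c x • d')) x := by
  have hinv := (hasDerivAt_inv hx).comp_hasFDerivAt x hd
  simp only [div_eq_mul_inv]
  refine (hc.mul hinv).congr_fderiv ?_
  ext v
  simp only [add_apply, smul_apply, sub_apply, Function.comp_apply, smul_eq_mul]
  field_simp
  ring

theorem LinearMap.det_prod_eq {R : Type*} [CommRing R] (f : R × R →ₗ[R] R × R) :
    LinearMap.det f = (f (1, 0)).1 * (f (0, 1)).2 - (f (0, 1)).1 * (f (1, 0)).2 := by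
  rw [← LinearMap.det_toMatrix (Module.Basis.finTwoProd R), Matrix.det_fin_two]
  simp [LinearMap.toMatrix_apply, Module.Basis.finTwoProd_zero, Module.Basis.finTwoProd_one]

theorem ContDiffAt.exists_hasStrictFDerivAt_equiv {𝕜 E : Type*} [RCLike 𝕜] [NormedAddCommGroup E]
    [NormedSpace 𝕜 E] [FiniteDimensional 𝕜 E] {f : E → E} {x : E} {n : WithTop ℕ∞}
    (hf : ContDiffAt 𝕜 n f x) (hn : n ≠ 0) (hdet : (fderiv 𝕜 f x).det ≠ 0) :
    ∃ e : E ≃L[𝕜] E, HasStrictFDerivAt f (e : E →L[𝕜] E) x :=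
  ⟨(fderiv 𝕜 f x).toContinuousLinearEquivOfDetNeZero hdet, by
    rw [ContinuousLinearMap.coe_toContinuousLinearEquivOfDetNeZero]
    exact hf.hasStrictFDerivAt hn⟩

theorem IsOpen.image_of_hasStrictFDerivAt_equiv {𝕜 E F : Type*} [NontriviallyNormedField 𝕜]
    [NormedAddCommGroup E] [NormedSpace 𝕜 E] [CompleteSpace E] [NormedAddCommGroup F]
    [NormedSpace 𝕜 F] {f : E → F} {s : Set E} (hs : IsOpen s)
    (hf : ∀ x ∈ s, ∃ e : E ≃L[𝕜] F, HasStrictFDerivAt f (e : E →L[𝕜] F) x) :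
    IsOpen (f '' s) := by
  rw [isOpen_iff_mem_nhds]
  rintro _ ⟨x, hx, rfl⟩
  obtain ⟨e, he⟩ := hf x hx
  rw [← he.map_nhds_eq_of_equiv]
  exact Filter.image_mem_map (hs.mem_nhds hx)

def psiDenom (l m : ℝ) : ℝ := 1 + 2 * (l + m) * (l * m - 1) - l ^ 2 * m ^ 2

theorem psiDenom_eq (l m : ℝ) : psiDenom l m = (l + m - 1) ^ 2 - (l + m - l * m) ^ 2 := by
  unfold psiDenom
  ring

theorem psiDenom_pos_of_mem_Vset {p : ℝ × ℝ} (hp : p ∈ Vset) : 0 < psiDenom p.1 p.2 := by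
  obtain ⟨-, -, -, -, hne, habs⟩ := hp
  rw [abs_div, div_lt_one (abs_pos.2 (sub_ne_zero.2 hne)), ← sq_lt_sq] at habs
  rw [psiDenom_eq]
  linarith

theorem contDiffAt_Psi {n : WithTop ℕ∞} {p : ℝ × ℝ} (hp : psiDenom p.1 p.2 ≠ 0) :
    ContDiffAt ℝ n Psi p := by
  unfold Psi calA calB
  unfold psiDenom at hp
  fun_prop (disch := exact hp)

theorem det_fderiv_Psi {p : ℝ × ℝ} (hp : psiDenom p.1 p.2 ≠ 0) :
    (fderiv ℝ Psi p).det = 3 * (1 - p.1 ^ 2) * (1 - p.2 ^ 2) / psiDenom p.1 p.2 ^ 2 := by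
  have hl : HasFDerivAt (fun q : ℝ × ℝ => q.1) (ContinuousLinearMap.fst ℝ ℝ ℝ) p := hasFDerivAt_fst
  have hm : HasFDerivAt (fun q : ℝ × ℝ => q.2) (ContinuousLinearMap.snd ℝ ℝ ℝ) p := hasFDerivAt_snd
  have hD : HasFDerivAt (fun q : ℝ × ℝ => psiDenom q.1 q.2) _ p :=
    ((((hl.add hm).const_mul 2).mul ((hl.mul hm).sub_const 1)).const_add 1).sub
      ((hl.pow 2).mul (hm.pow 2))
  have hA := (((hl.pow 2).const_sub 1).mul (((hm.pow 2).sub hm).add_const 1)).div hD hp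
  have hB := (((hm.pow 2).const_sub 1).mul (((hl.pow 2).sub hl).add_const 1)).div hD hp
  have hPsi : HasFDerivAt Psi _ p := hA.prodMk hB
  rw [hPsi.fderiv, ContinuousLinearMap.det, LinearMap.det_prod_eq]
  simp only [ContinuousLinearMap.coe_coe, ContinuousLinearMap.prod_apply, add_apply, sub_apply,
    smul_apply, neg_apply, ContinuousLinearMap.coe_fst', ContinuousLinearMap.coe_snd', Pi.mul_apply,
    Pi.add_apply, Pi.sub_apply, smul_eq_mul, nsmul_eq_mul]
  unfold psiDenom at *
  field_simp
  ring

theorem exists_hasStrictFDerivAt_Psi_equiv {p : ℝ × ℝ} (hp : p ∈ Vset) :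
    ∃ e : (ℝ × ℝ) ≃L[ℝ] (ℝ × ℝ), HasStrictFDerivAt Psi (e : (ℝ × ℝ) →L[ℝ] (ℝ × ℝ)) p := by
  have hD := psiDenom_pos_of_mem_Vset hp
  obtain ⟨hl₁, hl₂, hm₁, hm₂, -⟩ := hp
  have hl : 0 < 1 - p.1 ^ 2 := by nlinarith
  have hm : 0 < 1 - p.2 ^ 2 := by nlinarith
  refine (contDiffAt_Psi hD.ne').exists_hasStrictFDerivAt_equiv one_ne_zero ?_
  rw [det_fderiv_Psi hD.ne']
  positivity

theorem Psi_local_diffeomorphism :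
    DifferentiableOn ℝ Psi Vset ∧
    (∀ p ∈ Vset, ∃ f : (ℝ × ℝ) ≃L[ℝ] (ℝ × ℝ),
      HasFDerivAt Psi (f : (ℝ × ℝ) →L[ℝ] (ℝ × ℝ)) p) ∧
    (∀ s : Set (ℝ × ℝ), s ⊆ Vset → IsOpen s → IsOpen (Psi '' s)) := by
  refine ⟨fun p hp => ?_, fun p hp => ?_, fun s hsV hs => ?_⟩
  · obtain ⟨e, he⟩ := exists_hasStrictFDerivAt_Psi_equiv hp
    exact he.differentiableAt.differentiableWithinAt
  · obtain ⟨e, he⟩ := exists_hasStrictFDerivAt_Psi_equiv hp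
    exact ⟨e, he.hasFDerivAt⟩
  · exact hs.image_of_hasStrictFDerivAt_equiv fun x hx =>
      exists_hasStrictFDerivAt_Psi_equiv (hsV hx)
end

section
/- The image of V under the map (λ,μ) ↦ (𝒜(λ,μ), ℬ(λ,μ)) is exactly the set 𝒲₊ = {(x₁,x₂) ∈ ℝ² : x₁ > 0, x₂ > 0, x₁ + x₂ > 1, x₁ + 1 > x₂, x₂ + 1 > x₁}. -/
open Set

/-!
The substitution `u = (1 - λ)/(1 + λ)`, `v = (1 - μ)/(1 + μ)` (an involution of `(-1, ∞)`) maps `V`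
bijectively onto the region `u, v > 0`, `3uv > 1`, and turns `𝒜`, `ℬ` into
`u(1 + 3v²)/((u + v)(3uv - 1))` and `v(1 + 3u²)/((u + v)(3uv - 1))`. For these,
`𝒜 + ℬ = (3uv + 1)/(3uv - 1)` and `𝒜 - ℬ = (v - u)/(u + v)`, so the pair `(𝒜 + ℬ, 𝒜 - ℬ)` runs exactly
over `(1, ∞) × (-1, 1)`, which is `𝒲₊` in the coordinates `x₁ + x₂`, `x₁ - x₂`.
-/

noncomputable def cayley (u : ℝ) : ℝ := (1 - u) / (1 + u)

lemma cayley_cayley {u : ℝ} (hu : 1 + u ≠ 0) : cayley (cayley u) = u := by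
  unfold cayley
  field_simp
  ring

lemma cayley_mem_Ioo {u : ℝ} (hu : 0 < u) : cayley u ∈ Ioo (-1) 1 := by
  unfold cayley
  constructor
  · rw [lt_div_iff₀ (by linarith)]; linarith
  · rw [div_lt_one (by linarith)]; linarith

lemma cayley_pos {l : ℝ} (hl : l ∈ Ioo (-1) 1) : 0 < cayley l :=
  div_pos (by linarith [hl.2]) (by linarith [hl.1])

def cayleyDomain : Set (ℝ × ℝ) := {p | 0 < p.1 ∧ 0 < p.2 ∧ 1 < 3 * p.1 * p.2}

lemma cayley_mem_Vset_iff {u v : ℝ} (hu : 0 < u) (hv : 0 < v) :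
    (cayley u, cayley v) ∈ Vset ↔ 1 < 3 * u * v := by
  obtain ⟨hl₁, hl₂⟩ := cayley_mem_Ioo hu
  obtain ⟨hm₁, hm₂⟩ := cayley_mem_Ioo hv
  have hc : (1 + u) * (1 + v) ≠ 0 := by positivity
  have hsum : cayley u + cayley v - 1 = (1 - u - v - 3 * u * v) / ((1 + u) * (1 + v)) := by
    unfold cayley; field_simp; ring
  have hprod : cayley u + cayley v - cayley u * cayley v =
      (1 + u + v - 3 * u * v) / ((1 + u) * (1 + v)) := by
    unfold cayley; field_simp; ring
  have hratio : (cayley u + cayley v - cayley u * cayley v) / (cayley u + cayley v - 1) =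
      (1 + u + v - 3 * u * v) / (1 - u - v - 3 * u * v) := by
    rw [hprod, hsum, div_div_div_cancel_right₀ hc]
  simp only [Vset, mem_ofPred_eq, hratio]
  constructor
  · rintro ⟨-, -, -, -, hne, h⟩
    have hD : 1 - u - v - 3 * u * v ≠ 0 := by
      intro hD
      rw [hD, zero_div] at hsum
      exact hne (by linarith)
    -- the difference of the squares of numerator and denominator is `4(u + v)(1 - 3uv)`
    rw [abs_div, div_lt_one (abs_pos.mpr hD), ← sq_lt_sq] at h
    nlinarith
  · intro h
    have hD : 1 - u - v - 3 * u * v < 0 := by linarith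
    refine ⟨hl₁, hl₂, hm₁, hm₂, fun hne => ?_, ?_⟩
    · rw [hne, sub_self, eq_comm, div_eq_zero_iff] at hsum
      exact hsum.elim hD.ne hc
    rw [abs_div, div_lt_one (abs_pos.mpr hD.ne), ← sq_lt_sq]
    nlinarith [mul_pos hu hv]

lemma Vset_eq_image_cayley : Vset = Prod.map cayley cayley '' cayleyDomain := by
  ext ⟨l, m⟩
  constructor
  · intro h
    have hl : l ∈ Ioo (-1) 1 := ⟨h.1, h.2.1⟩
    have hm : m ∈ Ioo (-1) 1 := ⟨h.2.2.1, h.2.2.2.1⟩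
    refine ⟨(cayley l, cayley m), ⟨cayley_pos hl, cayley_pos hm, ?_⟩, ?_⟩
    · rwa [← cayley_mem_Vset_iff (cayley_pos hl) (cayley_pos hm),
        cayley_cayley (by linarith [hl.1]), cayley_cayley (by linarith [hm.1])]
    · simp only [Prod.map, cayley_cayley (by linarith [hl.1] : 1 + l ≠ 0),
        cayley_cayley (by linarith [hm.1] : 1 + m ≠ 0)]
  · rintro ⟨⟨u, v⟩, ⟨hu, hv, huv⟩, h⟩
    rw [← h]
    exact (cayley_mem_Vset_iff hu hv).mpr huv

lemma calB_eq_calA_swap (l m : ℝ) : calB l m = calA m l := by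
  unfold calA calB
  ring_nf

lemma calA_cayley {u v : ℝ} (hu : 1 + u ≠ 0) (hv : 1 + v ≠ 0) :
    calA (cayley u) (cayley v) = u * (1 + 3 * v ^ 2) / ((u + v) * (3 * u * v - 1)) := by
  -- `1 - λ² = 4u/(1 + u)²`, `μ² - μ + 1 = (1 + 3v²)/(1 + v)²` and the denominator is
  -- `4(u + v)(3uv - 1)/((1 + u)(1 + v))²`.
  have hc : 4 / ((1 + u) * (1 + v)) ^ 2 ≠ 0 := by positivity
  rw [← mul_div_mul_right _ _ hc, calA]
  unfold cayley
  congr 1 <;> field_simp <;> ring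

lemma calB_cayley {u v : ℝ} (hu : 1 + u ≠ 0) (hv : 1 + v ≠ 0) :
    calB (cayley u) (cayley v) = v * (1 + 3 * u ^ 2) / ((u + v) * (3 * u * v - 1)) := by
  rw [calB_eq_calA_swap, calA_cayley hv hu]
  ring_nf

noncomputable def cayleyModel (p : ℝ × ℝ) : ℝ × ℝ :=
  (p.1 * (1 + 3 * p.2 ^ 2) / ((p.1 + p.2) * (3 * p.1 * p.2 - 1)),
    p.2 * (1 + 3 * p.1 ^ 2) / ((p.1 + p.2) * (3 * p.1 * p.2 - 1)))

lemma calA_calB_comp_cayley_eqOn :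
    EqOn ((fun p : ℝ × ℝ => (calA p.1 p.2, calB p.1 p.2)) ∘ Prod.map cayley cayley)
      cayleyModel cayleyDomain := by
  rintro ⟨u, v⟩ ⟨hu, hv, -⟩
  have hu' : 1 + u ≠ 0 := by positivity
  have hv' : 1 + v ≠ 0 := by positivity
  simp only [Function.comp, Prod.map, calA_cayley hu' hv', calB_cayley hu' hv', cayleyModel]

lemma cayleyModel_fst_add_snd {u v : ℝ} (h : u + v ≠ 0) :
    (cayleyModel (u, v)).1 + (cayleyModel (u, v)).2 = (1 + 3 * u * v) / (3 * u * v - 1) := by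
  have hnum : u * (1 + 3 * v ^ 2) + v * (1 + 3 * u ^ 2) = (u + v) * (1 + 3 * u * v) := by ring
  rw [cayleyModel, ← add_div, hnum, mul_div_mul_left _ _ h]

lemma cayleyModel_fst_sub_snd {u v : ℝ} (h : 3 * u * v - 1 ≠ 0) :
    (cayleyModel (u, v)).1 - (cayleyModel (u, v)).2 = (v - u) / (u + v) := by
  have hnum : u * (1 + 3 * v ^ 2) - v * (1 + 3 * u ^ 2) = (v - u) * (3 * u * v - 1) := by ring
  rw [cayleyModel, ← sub_div, hnum, mul_div_mul_right _ _ h]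

def Wplus : Set (ℝ × ℝ) :=
  {x | 0 < x.1 ∧ 0 < x.2 ∧ 1 < x.1 + x.2 ∧ x.2 < x.1 + 1 ∧ x.1 < x.2 + 1}

lemma mem_Wplus_iff {x : ℝ × ℝ} : x ∈ Wplus ↔ 1 < x.1 + x.2 ∧ |x.1 - x.2| < 1 := by
  simp only [Wplus, mem_ofPred_eq, abs_sub_lt_iff]
  constructor
  · rintro ⟨-, -, h₁, h₂, h₃⟩
    exact ⟨h₁, by linarith, by linarith⟩
  · rintro ⟨h₁, h₂, h₃⟩
    exact ⟨by linarith, by linarith, h₁, by linarith, by linarith⟩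

lemma mapsTo_cayleyModel : MapsTo cayleyModel cayleyDomain Wplus := by
  rintro ⟨u, v⟩ ⟨hu, hv, huv⟩
  rw [mem_Wplus_iff, cayleyModel_fst_add_snd (by positivity),
    cayleyModel_fst_sub_snd (by linarith), one_lt_div (by linarith), abs_div,
    abs_of_pos (by positivity : 0 < u + v), div_lt_one (by positivity), abs_sub_lt_iff]
  exact ⟨by linarith, by linarith, by linarith⟩

lemma exists_mul_eq_sub_div_add_eq {p d : ℝ} (hp : 0 < p) (hd : |d| < 1) :
    ∃ u v : ℝ, 0 < u ∧ 0 < v ∧ u * v = p ∧ (v - u) / (u + v) = d := by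
  obtain ⟨hd₁, hd₂⟩ := abs_lt.mp hd
  have hq : 0 < 1 - d ^ 2 := by nlinarith
  set t := √(p / (1 - d ^ 2))
  have ht : 0 < t := Real.sqrt_pos.mpr (by positivity)
  have ht2 : t ^ 2 = p / (1 - d ^ 2) := Real.sq_sqrt (by positivity)
  refine ⟨t * (1 - d), t * (1 + d), by nlinarith, by nlinarith, ?_, ?_⟩
  · rw [← mul_mul_mul_comm, ← sq, ht2]
    field_simp
    ring
  · rw [div_eq_iff (by nlinarith)]
    ring

lemma surjOn_cayleyModel : SurjOn cayleyModel cayleyDomain Wplus := by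
  rintro ⟨a, b⟩ hab
  obtain ⟨hs, hd⟩ := mem_Wplus_iff.mp hab
  dsimp only at hs hd
  have hσ : a + b - 1 ≠ 0 := by linarith
  -- `s = (σ + 1)/(σ - 1)` inverts `s ↦ (1 + s)/(s - 1)`, with `σ = a + b` and `s = 3uv`.
  obtain ⟨u, v, hu, hv, huv, hdiff⟩ :=
    exists_mul_eq_sub_div_add_eq (p := (a + b + 1) / (3 * (a + b - 1)))
      (div_pos (by linarith) (by linarith)) hd
  have h3uv : 3 * u * v = (a + b + 1) / (a + b - 1) := by
    rw [mul_assoc, huv]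
    field_simp
  have h3uv_gt : 1 < 3 * u * v := by
    rw [h3uv, one_lt_div] <;> linarith
  refine ⟨(u, v), ⟨hu, hv, h3uv_gt⟩, ?_⟩
  have hsum : (cayleyModel (u, v)).1 + (cayleyModel (u, v)).2 = a + b := by
    rw [cayleyModel_fst_add_snd (by positivity), h3uv]
    field_simp
    ring
  have hsub : (cayleyModel (u, v)).1 - (cayleyModel (u, v)).2 = a - b := by
    rw [cayleyModel_fst_sub_snd (by linarith), hdiff]
  ext <;> dsimp only <;> linarith

lemma image_cayleyModel : cayleyModel '' cayleyDomain = Wplus :=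
  mapsTo_cayleyModel.image_subset.antisymm surjOn_cayleyModel

theorem image_of_V_is_W_plus :
    (fun p : ℝ × ℝ => (calA p.1 p.2, calB p.1 p.2)) '' Vset =
      {x : ℝ × ℝ | 0 < x.1 ∧ 0 < x.2 ∧ 1 < x.1 + x.2 ∧ x.2 < x.1 + 1 ∧ x.1 < x.2 + 1} := by
  rw [Vset_eq_image_cayley, image_image]
  exact calA_calB_comp_cayley_eqOn.image_eq.trans image_cayleyModel
end

section
/- Let s, t ∈ [0,1] and ω, ν ∈ ℂ with |ω| = |ν| = 1. Set A = ts, B = t(1−s), C = 1−t, D = νt, E = ωs + ν(1−s)(1−t), F = νs(1−t) + ω(1−s). Then for every (z₁,z₂,z₃) ∈ 𝔻³ the denominators 1 + ν(1−s)z₁ + νsz₂, 1 + ω(1−t)Φ_{s,ν}(z₁,z₂) + ωtz₃ and 1 + ων(conj(F)z₁ + conj(E)z₂ + conj(D)z₃ + Cz₁z₂ + Bz₁z₃ + Az₂z₃) are nonzero, and Φ_{t,ω}(Φ_{s,ν}(z₁,z₂), z₃) = (Az₁ + Bz₂ + Cz₃ + Dz₁z₂ + Ez₁z₃ + Fz₂z₃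 + ωνz₁z₂z₃) / (1 + ων(conj(F)z₁ + conj(E)z₂ + conj(D)z₃ + Cz₁z₂ + Bz₁z₃ + Az₂z₃)). -/
/-!
The denominator of `Φ_{a,η}` equals `1 + η((1−a)x + ay)` and the open disc is convex, so it
does not vanish on `𝔻²`. For `|η| = 1` one has the identity
`|den|² − |num|² = (1−a)(1−|y|²)|1+ηx|² + a(1−|x|²)|1+ηy|²`, a convex combination of positive
numbers, so `Φ_{a,η}` maps `𝔻²` into `𝔻` and the composition is defined. Writing
`Φ_{s,ν} = N/D` and clearing `D` turns `Φ_{t,ω}(N/D, z₃)` into a cubic over `D` times the outer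
denominator; with `conj ω = ω⁻¹` and `conj ν = ν⁻¹` that product is the stated symmetric
expression.
-/

open Complex Set

/-- The magic function `Φ_{a,η}(x,y) = (ax + (1−a)y + ηxy)/(1 + η(1−a)x + ηay)`. -/
noncomputable def magic (a : ℝ) (η : ℂ) (x y : ℂ) : ℂ :=
  ((a : ℂ) * x + (1 - (a : ℂ)) * y + η * x * y) /
    (1 + η * (1 - (a : ℂ)) * x + η * (a : ℂ) * y)

lemma one_add_ne_zero_of_norm_lt_one {R : Type*} [SeminormedRing R] [NormOneClass R] {u : R}
    (hu : ‖u‖ < 1) : 1 + u ≠ 0 := by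
  intro h
  rw [eq_neg_of_add_eq_zero_right h, norm_neg, norm_one] at hu
  exact lt_irrefl _ hu

lemma magic_den_ne_zero {a : ℝ} (ha : a ∈ Icc (0 : ℝ) 1) {η x y : ℂ} (hη : ‖η‖ ≤ 1)
    (hx : ‖x‖ < 1) (hy : ‖y‖ < 1) :
    1 + η * (1 - (a : ℂ)) * x + η * (a : ℂ) * y ≠ 0 := by
  have hw : (1 - a) • x + a • y ∈ Metric.ball (0 : ℂ) 1 :=
    convex_ball 0 1 (mem_ball_zero_iff.2 hx) (mem_ball_zero_iff.2 hy) (sub_nonneg.2 ha.2) ha.1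
      (by ring)
  have hlt : ‖η * ((1 - a) • x + a • y)‖ < 1 := by
    rw [norm_mul]
    exact mul_lt_one_of_nonneg_of_lt_one_right hη (norm_nonneg _) (mem_ball_zero_iff.1 hw)
  convert one_add_ne_zero_of_norm_lt_one hlt using 1
  simp only [Complex.real_smul]
  push_cast
  ring

lemma normSq_magic_den_sub_normSq_magic_num (a : ℝ) {η : ℂ} (hη : ‖η‖ = 1) (x y : ℂ) :
    normSq (1 + η * (1 - (a : ℂ)) * x + η * (a : ℂ) * y)
        - normSq ((a : ℂ) * x + (1 - (a : ℂ)) * y + η * x * y)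
      = (1 - a) * ((1 - normSq y) * normSq (1 + η * x))
        + a * ((1 - normSq x) * normSq (1 + η * y)) := by
  have hη₀ : η ≠ 0 := norm_ne_zero_iff.1 (by rw [hη]; exact one_ne_zero)
  apply ofReal_injective
  push_cast
  simp only [← mul_conj, map_add, map_mul, map_sub, map_one, conj_ofReal, ← inv_eq_conj hη]
  field_simp
  ring

lemma norm_magic_lt_one {a : ℝ} (ha : a ∈ Icc (0 : ℝ) 1) {η x y : ℂ} (hη : ‖η‖ = 1)
    (hx : ‖x‖ < 1) (hy : ‖y‖ < 1) : ‖magic a η x y‖ < 1 := by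
  have hx' : normSq x < 1 := by
    rw [← Complex.sq_norm]; exact pow_lt_one₀ (norm_nonneg x) hx two_ne_zero
  have hy' : normSq y < 1 := by
    rw [← Complex.sq_norm]; exact pow_lt_one₀ (norm_nonneg y) hy two_ne_zero
  have hP : 0 < (1 - normSq y) * normSq (1 + η * x) :=
    mul_pos (sub_pos.2 hy') <| normSq_pos.2 <| one_add_ne_zero_of_norm_lt_one <| by
      rwa [norm_mul, hη, one_mul]
  have hQ : 0 < (1 - normSq x) * normSq (1 + η * y) :=
    mul_pos (sub_pos.2 hx') <| normSq_pos.2 <| one_add_ne_zero_of_norm_lt_one <| by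
      rwa [norm_mul, hη, one_mul]
  have hpos : 0 < (1 - a) • ((1 - normSq y) * normSq (1 + η * x))
      + a • ((1 - normSq x) * normSq (1 + η * y)) :=
    convex_Ioi (0 : ℝ) hP hQ (sub_nonneg.2 ha.2) ha.1 (by ring)
  simp only [smul_eq_mul, ← normSq_magic_den_sub_normSq_magic_num a hη, sub_pos] at hpos
  rw [magic, norm_div, div_lt_one (norm_pos_iff.2 (magic_den_ne_zero ha hη.le hx hy)),
    ← sq_lt_sq₀ (norm_nonneg _) (norm_nonneg _), Complex.sq_norm, Complex.sq_norm]
  exact hpos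

lemma mul_magic_den_div (a : ℝ) (η N D y : ℂ) (hD : D ≠ 0) :
    D * (1 + η * (1 - (a : ℂ)) * (N / D) + η * (a : ℂ) * y)
      = D + η * (1 - (a : ℂ)) * N + η * (a : ℂ) * y * D := by
  field_simp

lemma magic_div_left (a : ℝ) (η N D y : ℂ) (hD : D ≠ 0) :
    magic a η (N / D) y
      = ((a : ℂ) * N + (1 - (a : ℂ)) * y * D + η * N * y)
        / (D + η * (1 - (a : ℂ)) * N + η * (a : ℂ) * y * D) := by
  rw [magic, ← mul_div_mul_left _ _ hD, mul_magic_den_div a η N D y hD]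
  congr 1
  field_simp

lemma magic_comp_den_eq (s t : ℝ) {ω ν : ℂ} (hω : ‖ω‖ = 1) (hν : ‖ν‖ = 1) (z₁ z₂ z₃ : ℂ) :
    1 + ω * ν * ((starRingEnd ℂ) (ν * (s : ℂ) * (1 - (t : ℂ)) + ω * (1 - (s : ℂ))) * z₁
        + (starRingEnd ℂ) (ω * (s : ℂ) + ν * (1 - (s : ℂ)) * (1 - (t : ℂ))) * z₂
        + (starRingEnd ℂ) (ν * (t : ℂ)) * z₃
        + (1 - (t : ℂ)) * z₁ * z₂ + (t : ℂ) * (1 - (s : ℂ)) * z₁ * z₃ + (t : ℂ) * (s : ℂ) * z₂ * z₃)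
      = (1 + ν * (1 - (s : ℂ)) * z₁ + ν * (s : ℂ) * z₂)
        + ω * (1 - (t : ℂ)) * ((s : ℂ) * z₁ + (1 - (s : ℂ)) * z₂ + ν * z₁ * z₂)
        + ω * (t : ℂ) * z₃ * (1 + ν * (1 - (s : ℂ)) * z₁ + ν * (s : ℂ) * z₂) := by
  have hωω : ω * (starRingEnd ℂ) ω = 1 := by rw [mul_conj', hω]; norm_num
  have hνν : ν * (starRingEnd ℂ) ν = 1 := by rw [mul_conj', hν]; norm_num
  simp only [map_add, map_mul, map_sub, map_one, conj_ofReal]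
  linear_combination
    (ω * s * (1 - t) * z₁ + ω * (1 - s) * (1 - t) * z₂ + ω * t * z₃) * hνν
      + (ν * (1 - s) * z₁ + ν * s * z₂) * hωω

theorem composition_of_magic_functions
    (s t : ℝ) (hs : s ∈ Set.Icc (0 : ℝ) 1) (ht : t ∈ Set.Icc (0 : ℝ) 1)
    (ω ν : ℂ) (hω : ‖ω‖ = 1) (hν : ‖ν‖ = 1)
    (A B C D E F : ℂ)
    (hA : A = (t : ℂ) * (s : ℂ)) (hB : B = (t : ℂ) * (1 - (s : ℂ)))
    (hC : C = 1 - (t : ℂ)) (hD : D = ν * (t : ℂ))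
    (hE : E = ω * (s : ℂ) + ν * (1 - (s : ℂ)) * (1 - (t : ℂ)))
    (hF : F = ν * (s : ℂ) * (1 - (t : ℂ)) + ω * (1 - (s : ℂ))) :
    ∀ z₁ z₂ z₃ : ℂ, ‖z₁‖ < 1 → ‖z₂‖ < 1 → ‖z₃‖ < 1 →
      (1 + ν * (1 - (s : ℂ)) * z₁ + ν * (s : ℂ) * z₂ ≠ 0) ∧
      (1 + ω * (1 - (t : ℂ)) * magic s ν z₁ z₂ + ω * (t : ℂ) * z₃ ≠ 0) ∧
      (1 + ω * ν * ((starRingEnd ℂ) F * z₁ + (starRingEnd ℂ) E * z₂ + (starRingEnd ℂ) D * z₃ +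
        C * z₁ * z₂ + B * z₁ * z₃ + A * z₂ * z₃) ≠ 0) ∧
      magic t ω (magic s ν z₁ z₂) z₃ =
        (A * z₁ + B * z₂ + C * z₃ + D * z₁ * z₂ + E * z₁ * z₃ + F * z₂ * z₃ +
            ω * ν * z₁ * z₂ * z₃) /
          (1 + ω * ν * ((starRingEnd ℂ) F * z₁ + (starRingEnd ℂ) E * z₂ + (starRingEnd ℂ) D * z₃ +
            C * z₁ * z₂ + B * z₁ * z₃ + A * z₂ * z₃)) := by
  intro z₁ z₂ z₃ h₁ h₂ h₃
  subst hA hB hC hD hE hF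
  have hd₁ := magic_den_ne_zero hs hν.le h₁ h₂
  have hd₂ := magic_den_ne_zero ht hω.le (norm_magic_lt_one hs hν h₁ h₂) h₃
  have hX : magic s ν z₁ z₂ = ((s : ℂ) * z₁ + (1 - (s : ℂ)) * z₂ + ν * z₁ * z₂)
      / (1 + ν * (1 - (s : ℂ)) * z₁ + ν * (s : ℂ) * z₂) := rfl
  refine ⟨hd₁, hd₂, ?_, ?_⟩
  · rw [magic_comp_den_eq s t hω hν, ← mul_magic_den_div _ _ _ _ _ hd₁, ← hX]
    exact mul_ne_zero hd₁ hd₂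
  · rw [hX, magic_div_left _ _ _ _ _ hd₁, magic_comp_den_eq s t hω hν]
    congr 1
    ring
end

section
/- For all complex numbers z, w one has |z + w − zw|² − |z + w − 1|² = 2·Re(z)·(1 − |w|²) + 2·Re(w)·(1 − |z|²) − (1 − |z|²|w|²). In particular, for z, w ∈ 𝔻 with 2·Re(z)·(1 − |w|²) + 2·Re(w)·(1 − |z|²) < 1 − |z|²|w|², one has z + w ≠ 1 and |(z + w − zw)/(z + w − 1)| < 1. -/
open Complex

theorem norm_add_sub_mul_sq_sub_norm_add_sub_one_sq (z w : ℂ) :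
    ‖z + w - z * w‖ ^ 2 - ‖z + w - 1‖ ^ 2 =
      2 * z.re * (1 - ‖w‖ ^ 2) + 2 * w.re * (1 - ‖z‖ ^ 2) - (1 - ‖z‖ ^ 2 * ‖w‖ ^ 2) := by
  simp only [Complex.sq_norm, normSq_apply, sub_re, sub_im, add_re, add_im, mul_re, mul_im,
    one_re, one_im]
  ring

theorem norm_div_lt_one_of_norm_lt {𝕜 : Type*} [NormedDivisionRing 𝕜] {a b : 𝕜}
    (h : ‖a‖ < ‖b‖) : ‖a / b‖ < 1 := by
  rw [norm_div, div_lt_one ((norm_nonneg a).trans_lt h)]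
  exact h

theorem abs_sq_identity_and_consequence :
    (∀ z w : ℂ,
      ‖z + w - z * w‖ ^ 2 - ‖z + w - 1‖ ^ 2 =
        2 * z.re * (1 - ‖w‖ ^ 2) + 2 * w.re * (1 - ‖z‖ ^ 2) -
          (1 - ‖z‖ ^ 2 * ‖w‖ ^ 2)) ∧
    (∀ z w : ℂ, ‖z‖ < 1 → ‖w‖ < 1 →
      2 * z.re * (1 - ‖w‖ ^ 2) + 2 * w.re * (1 - ‖z‖ ^ 2) <
        1 - ‖z‖ ^ 2 * ‖w‖ ^ 2 →
      z + w ≠ 1 ∧ ‖(z + w - z * w) / (z + w - 1)‖ < 1) := by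
  refine ⟨norm_add_sub_mul_sq_sub_norm_add_sub_one_sq, fun z w _ _ h => ?_⟩
  have hsq : ‖z + w - z * w‖ ^ 2 < ‖z + w - 1‖ ^ 2 := by
    linarith [norm_add_sub_mul_sq_sub_norm_add_sub_one_sq z w]
  have hlt : ‖z + w - z * w‖ < ‖z + w - 1‖ := lt_of_pow_lt_pow_left₀ 2 (norm_nonneg _) hsq
  have hne : z + w - 1 ≠ 0 := norm_pos_iff.mp ((norm_nonneg _).trans_lt hlt)
  exact ⟨sub_ne_zero.mp hne, norm_div_lt_one_of_norm_lt hlt⟩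
end

section
/- Let ζ₂ ∈ ℂ with |ζ₂| = 1 and Re(ζ₂) ≤ 1/2. Then for every z ∈ 𝔻 one has z + ζ₂ ≠ 1, and the point ξ(z,ζ₂) = (z, ζ₂, (z + ζ₂ − zζ₂)/(z + ζ₂ − 1)) belongs to the closure of M_{(1,1,1)} in ℂ³ but not to M_{(1,1,1)} itself; in particular the analytic disc z ↦ ξ(z,ζ₂) maps 𝔻 into the topological boundary of M_{(1,1,1)}. -/
open Complex Set

open Filter Topology

/-! On `a + b ≠ 1` the equation of `M_{(1,1,1)}` forces `c = (a + b - ab)/(a + b - 1)`, and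
`|c| < 1` iff `|a + b - ab|² < |a + b - 1|²`. The difference of these squares is
`(1 - |a|²)(1 - 2 Re b) + (|a|² - 2 Re a)(1 - |b|²)`, which at `(a, b) = (z, ζ₂)` equals
`(1 - |z|²)(1 - 2 Re ζ₂) ≥ 0`. Moving `b` into the disc along `ε ↦ ζ₂ (1 - ε u)` with `Re u > 0`
keeps it positive for small `ε > 0`: by continuity when `Re ζ₂ < 1/2`, and when `Re ζ₂ = 1/2`
(so `ζ₂` is not real) because `u` can be tilted to make the first-order term positive. -/

lemma eventually_quadratic_pos {c₀ c₁ : ℝ} (c₂ : ℝ) (h₀ : 0 ≤ c₀) (h : 0 < c₀ ∨ 0 < c₁) :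
    ∀ᶠ ε in 𝓝[>] (0 : ℝ), 0 < c₀ + c₁ * ε - c₂ * ε ^ 2 := by
  rcases h with h | h
  · have hlim : Tendsto (fun ε : ℝ => c₀ + c₁ * ε - c₂ * ε ^ 2) (𝓝 0) (𝓝 c₀) := by
      simpa using (by fun_prop : Continuous fun ε : ℝ => c₀ + c₁ * ε - c₂ * ε ^ 2).tendsto 0
    exact nhdsWithin_le_nhds (hlim.eventually (lt_mem_nhds h))
  · have hlim : Tendsto (fun ε : ℝ => c₁ - c₂ * ε) (𝓝 0) (𝓝 c₁) := by
      simpa using (by fun_prop : Continuous fun ε : ℝ => c₁ - c₂ * ε).tendsto 0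
    filter_upwards [self_mem_nhdsWithin, nhdsWithin_le_nhds (hlim.eventually (lt_mem_nhds h))]
      with ε (hε : 0 < ε) (hc : 0 < c₁ - c₂ * ε)
    nlinarith

lemma normSq_add_sub_one_sub_normSq_add_sub_mul (a b : ℂ) :
    normSq (a + b - 1) - normSq (a + b - a * b) =
      (1 - normSq a) * (1 - 2 * b.re) + (normSq a - 2 * a.re) * (1 - normSq b) := by
  simp only [normSq_apply, sub_re, sub_im, add_re, add_im, mul_re, mul_im, one_re, one_im]
  ring

lemma one_sub_normSq_mul_one_sub {ζ : ℂ} (hζ : ‖ζ‖ = 1) (u : ℂ) (ε : ℝ) :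
    1 - normSq (ζ * (1 - ε * u)) = 2 * u.re * ε - normSq u * ε ^ 2 := by
  rw [normSq_mul, ← Complex.sq_norm, hζ]
  simp only [normSq_apply, sub_re, sub_im, mul_re, mul_im, ofReal_re, ofReal_im, one_re, one_im]
  ring

lemma normSq_sub_normSq_mul_one_sub {a ζ : ℂ} (hζ : ‖ζ‖ = 1) (u : ℂ) (ε : ℝ) :
    normSq (a + ζ * (1 - ε * u) - 1) - normSq (a + ζ * (1 - ε * u) - a * (ζ * (1 - ε * u))) =
      (1 - normSq a) * (1 - 2 * ζ.re)
        + 2 * ((1 - normSq a) * (ζ * u).re + (normSq a - 2 * a.re) * u.re) * ε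
        - (normSq a - 2 * a.re) * normSq u * ε ^ 2 := by
  rw [normSq_add_sub_one_sub_normSq_add_sub_mul, one_sub_normSq_mul_one_sub hζ]
  simp only [mul_re, sub_re, one_re, ofReal_re, ofReal_im, sub_im, one_im, mul_im]
  ring

lemma exists_re_pos_and_pos {ζ : ℂ} {p : ℝ} (k : ℝ) (hp : 0 < p) (hζ : ‖ζ‖ = 1)
    (hre : ζ.re ≤ 1 / 2) :
    ∃ u : ℂ, 0 < u.re ∧ (0 < p * (1 - 2 * ζ.re) ∨ 0 < p * (ζ * u).re + k * u.re) := by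
  rcases hre.lt_or_eq with hlt | heq
  · exact ⟨1, one_pos, Or.inl (by nlinarith)⟩
  · have him : ζ.im ≠ 0 := by
      intro h0
      have := normSq_apply ζ
      rw [← Complex.sq_norm, hζ, heq, h0] at this
      norm_num at this
    refine ⟨1 + ((ζ.re - (1 - k) / p) / ζ.im : ℝ) * I, by simp, Or.inr ?_⟩
    have hu : p * (ζ * (1 + ((ζ.re - (1 - k) / p) / ζ.im : ℝ) * I)).re
        + k * (1 + ((ζ.re - (1 - k) / p) / ζ.im : ℝ) * I).re = 1 := by
      simp only [mul_re, add_re, add_im, one_re, one_im, mul_im, I_re, I_im, ofReal_re, ofReal_im]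
      field_simp
      ring
    exact hu.symm ▸ one_pos

lemma mk_mem_Mvar_one {a b : ℂ} (ha : ‖a‖ < 1) (hb : ‖b‖ < 1)
    (h : normSq (a + b - a * b) < normSq (a + b - 1)) :
    (a, b, (a + b - a * b) / (a + b - 1)) ∈ Mvar (1, 1, 1) := by
  have hD : a + b - 1 ≠ 0 := normSq_pos.1 ((normSq_nonneg _).trans_lt h)
  refine ⟨⟨ha, hb, ?_⟩, ?_⟩
  · rw [norm_div, div_lt_one (norm_pos_iff.2 hD)]
    rwa [normSq_eq_norm_sq, normSq_eq_norm_sq,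
      pow_lt_pow_iff_left₀ (norm_nonneg _) (norm_nonneg _) two_ne_zero] at h
  · simp only [map_one, one_mul]
    field_simp
    ring

lemma mem_closure_Mvar_one_of_tendsto {α : Type*} {l : Filter α} [l.NeBot] {b : α → ℂ}
    {a ζ : ℂ} (ha : ‖a‖ < 1) (hζ : a + ζ ≠ 1) (hb : Tendsto b l (𝓝 ζ))
    (hbD : ∀ᶠ x in l, ‖b x‖ < 1)
    (hQ : ∀ᶠ x in l, normSq (a + b x - a * b x) < normSq (a + b x - 1)) :
    (a, ζ, (a + ζ - a * ζ) / (a + ζ - 1)) ∈ closure (Mvar (1, 1, 1)) := by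
  have hD : a + ζ - 1 ≠ 0 := sub_ne_zero.2 hζ
  refine mem_closure_of_tendsto ?_ (hbD.and hQ |>.mono fun x hx => mk_mem_Mvar_one ha hx.1 hx.2)
  have hN := (tendsto_const_nhds (x := a)).add hb
  exact tendsto_const_nhds.prodMk_nhds
    (hb.prodMk_nhds (((hN.sub (tendsto_const_nhds.mul hb)).div (hN.sub tendsto_const_nhds) hD)))

lemma add_ne_one_of_norm_lt_one {z ζ : ℂ} (hz : ‖z‖ < 1) (hζ : ‖ζ‖ = 1) (hre : ζ.re ≤ 1 / 2) :
    z + ζ ≠ 1 := by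
  rintro h
  have h1 : normSq z = 2 - 2 * ζ.re := by
    rw [eq_sub_of_add_eq h, normSq_sub, ← Complex.sq_norm ζ, hζ]
    simp only [normSq_one, one_pow, one_mul, conj_re]
    ring
  have := Complex.sq_norm z ▸ pow_lt_one₀ (norm_nonneg z) hz two_ne_zero
  linarith

lemma mem_closure_Mvar_one {a ζ : ℂ} (ha : ‖a‖ < 1) (hζ : ‖ζ‖ = 1) (hre : ζ.re ≤ 1 / 2) :
    (a, ζ, (a + ζ - a * ζ) / (a + ζ - 1)) ∈ closure (Mvar (1, 1, 1)) := by
  have hp : 0 < 1 - normSq a := by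
    rw [← Complex.sq_norm]
    nlinarith [norm_nonneg a]
  obtain ⟨u, hu, hc⟩ := exists_re_pos_and_pos (normSq a - 2 * a.re) hp hζ hre
  refine mem_closure_Mvar_one_of_tendsto (b := fun ε : ℝ => ζ * (1 - ε * u)) (l := 𝓝[>] 0)
    ha (add_ne_one_of_norm_lt_one ha hζ hre) ?_ ?_ ?_
  · refine tendsto_nhdsWithin_of_tendsto_nhds ?_
    simpa using (by fun_prop : Continuous fun ε : ℝ => ζ * (1 - ε * u)).tendsto 0
  · filter_upwards
      [eventually_quadratic_pos (normSq u) le_rfl (Or.inr (by positivity : 0 < 2 * u.re))] with ε hε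
    rw [zero_add, ← one_sub_normSq_mul_one_sub hζ, sub_pos, ← Complex.sq_norm] at hε
    exact (sq_lt_one_iff₀ (norm_nonneg _)).1 hε
  · filter_upwards [eventually_quadratic_pos ((normSq a - 2 * a.re) * normSq u)
      (mul_nonneg hp.le (by linarith))
      (c₁ := 2 * ((1 - normSq a) * (ζ * u).re + (normSq a - 2 * a.re) * u.re))
      (hc.imp id fun h => by linarith)] with ε hε
    rw [← sub_pos, normSq_sub_normSq_mul_one_sub hζ]
    exact hε

theorem analytic_disc_in_boundary_of_M111
    (ζ₂ : ℂ) (h₂ : ‖ζ₂‖ = 1) (hre : ζ₂.re ≤ 1 / 2) :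
    ∀ z : ℂ, ‖z‖ < 1 →
      z + ζ₂ ≠ 1 ∧
      (z, ζ₂, (z + ζ₂ - z * ζ₂) / (z + ζ₂ - 1)) ∈ closure (Mvar (1, 1, 1)) ∧
      (z, ζ₂, (z + ζ₂ - z * ζ₂) / (z + ζ₂ - 1)) ∉ Mvar (1, 1, 1) :=
  fun z hz => ⟨add_ne_one_of_norm_lt_one hz h₂ hre, mem_closure_Mvar_one hz h₂ hre,
    fun h => h.1.2.1.ne h₂⟩
end

section
/- For every α = (α₁,α₂,α₃) ∈ ℂ³ satisfying the triangle inequality, the set clos(M_α) ∩ 𝕋³ is non-empty, where clos(M_α) is the closure of M_α in ℂ³ and 𝕋³ = {(z₁,z₂,z₃) ∈ ℂ³ : |z₁| = |z₂| = |z₃| = 1} is the three-torus. -/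
open Complex Set

/-- The three-torus `𝕋³ ⊆ ℂ³`. -/
def triTorus : Set (ℂ × ℂ × ℂ) :=
  {z | ‖z.1‖ = 1 ∧ ‖z.2.1‖ = 1 ∧ ‖z.2.2‖ = 1}

/-!
If `|α₁|, |α₂|, |α₃|` satisfy the triangle inequality, there is a triangle with these side lengths,
i.e. unimodular `u₁, u₂, u₃` with `α₁u₁ + α₂u₂ + α₃u₃ = 0` (the angle at one vertex is found by the
intermediate value theorem). Conjugating and multiplying by `u₁u₂u₃` gives
`conj α₁ u₂u₃ + conj α₂ u₁u₃ + conj α₃ u₁u₂ = 0`, so both sides of the equation of `M_α` vanish at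
`r u` for every `0 < r < 1`: the whole radius `{r u}` lies in `M_α`, and `u ∈ clos(M_α) ∩ 𝕋³`.
-/

open Filter Topology

lemma exists_norm_eq_one_norm_add_mul_eq {a b c : ℝ} (ha : 0 ≤ a) (hb : 0 ≤ b)
    (hc₁ : |a - b| ≤ c) (hc₂ : c ≤ a + b) :
    ∃ v : ℂ, ‖v‖ = 1 ∧ ‖(a : ℂ) + b * v‖ = c := by
  have hf : ContinuousOn (fun θ : ℝ ↦ ‖(a : ℂ) + b * exp (θ * I)‖) (Icc 0 Real.pi) := by
    fun_prop
  have hπ : ‖(a : ℂ) + b * exp (Real.pi * I)‖ = |a - b| := by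
    rw [exp_pi_mul_I, show (a : ℂ) + b * -1 = ((a - b : ℝ) : ℂ) by push_cast; ring,
      Complex.norm_real, Real.norm_eq_abs]
  have h0 : ‖(a : ℂ) + b * exp ((0 : ℝ) * I)‖ = a + b := by
    rw [ofReal_zero, zero_mul, exp_zero, mul_one, ← ofReal_add, Complex.norm_real,
      Real.norm_of_nonneg (add_nonneg ha hb)]
  obtain ⟨θ, -, hθ⟩ := intermediate_value_Icc' Real.pi_pos.le hf ⟨hπ ▸ hc₁, h0 ▸ hc₂⟩
  exact ⟨exp (θ * I), norm_exp_ofReal_mul_I θ, hθ⟩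

lemma mul_exp_neg_arg_mul_I (x : ℂ) : x * exp (-arg x * I) = ‖x‖ := by
  calc x * exp (-arg x * I) = ‖x‖ * exp (arg x * I) * exp (-arg x * I) := by
        rw [norm_mul_exp_arg_mul_I]
    _ = ‖x‖ := by rw [mul_assoc, ← exp_add, neg_mul, add_neg_cancel, exp_zero, mul_one]

lemma exists_norm_eq_one_mul_add_mul_add_mul_eq_zero {a b c : ℂ} (ha : ‖a‖ ≤ ‖b‖ + ‖c‖)
    (hb : ‖b‖ ≤ ‖a‖ + ‖c‖) (hc : ‖c‖ ≤ ‖a‖ + ‖b‖) :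
    ∃ u v w : ℂ, ‖u‖ = 1 ∧ ‖v‖ = 1 ∧ ‖w‖ = 1 ∧ a * u + b * v + c * w = 0 := by
  obtain ⟨v, hv, hz⟩ := exists_norm_eq_one_norm_add_mul_eq (norm_nonneg a) (norm_nonneg b)
    (abs_sub_le_iff.2 ⟨by linarith, by linarith⟩) hc
  set z : ℂ := ‖a‖ + ‖b‖ * v
  refine ⟨exp (-arg a * I), v * exp (-arg b * I), -exp ((arg z - arg c) * I),
    by rw [← ofReal_neg, norm_exp_ofReal_mul_I], by rw [norm_mul, hv, ← ofReal_neg,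
      norm_exp_ofReal_mul_I, one_mul], by rw [norm_neg, ← ofReal_sub, norm_exp_ofReal_mul_I], ?_⟩
  have hw : c * exp ((arg z - arg c) * I) = z :=
    calc c * exp ((arg z - arg c) * I) = c * exp (-arg c * I) * exp (arg z * I) := by
          rw [mul_assoc, ← exp_add]; congr 2; ring
      _ = z := by rw [mul_exp_neg_arg_mul_I, ← hz, norm_mul_exp_arg_mul_I]
  rw [mul_neg, hw, mul_exp_neg_arg_mul_I, mul_left_comm, mul_exp_neg_arg_mul_I]
  ring

lemma conj_mul_mul_add_eq_zero_of_mem_triTorus {a u : ℂ × ℂ × ℂ} (hu : u ∈ triTorus)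
    (h : a.1 * u.1 + a.2.1 * u.2.1 + a.2.2 * u.2.2 = 0) :
    (starRingEnd ℂ) a.1 * u.2.1 * u.2.2 + (starRingEnd ℂ) a.2.1 * u.1 * u.2.2 +
      (starRingEnd ℂ) a.2.2 * u.1 * u.2.1 = 0 := by
  obtain ⟨h₁, h₂, h₃⟩ := hu
  have hconj := congrArg (starRingEnd ℂ) h
  simp only [map_add, map_mul, map_zero, ← inv_eq_conj h₁, ← inv_eq_conj h₂,
    ← inv_eq_conj h₃] at hconj
  have hu₁ : u.1 ≠ 0 := norm_ne_zero_iff.1 (by simp [h₁])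
  have hu₂ : u.2.1 ≠ 0 := norm_ne_zero_iff.1 (by simp [h₂])
  have hu₃ : u.2.2 ≠ 0 := norm_ne_zero_iff.1 (by simp [h₃])
  field_simp at hconj
  linear_combination hconj

lemma smul_mem_Mvar {a u : ℂ × ℂ × ℂ} (hu : u ∈ triTorus)
    (h : a.1 * u.1 + a.2.1 * u.2.1 + a.2.2 * u.2.2 = 0) {r : ℝ} (hr : r ∈ Ioo 0 1) :
    r • u ∈ Mvar a := by
  have hrnorm : ∀ x : ℂ, ‖x‖ = 1 → ‖r • x‖ < 1 := fun x hx ↦ by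
    rw [norm_smul, hx, mul_one, Real.norm_of_nonneg hr.1.le]; exact hr.2
  refine ⟨⟨hrnorm _ hu.1, hrnorm _ hu.2.1, hrnorm _ hu.2.2⟩, ?_⟩
  simp only [Prod.smul_fst, Prod.smul_snd, Complex.real_smul]
  linear_combination (r : ℂ) * h - (r : ℂ) ^ 2 * conj_mul_mul_add_eq_zero_of_mem_triTorus hu h

lemma mem_closure_Mvar {a u : ℂ × ℂ × ℂ} (hu : u ∈ triTorus)
    (h : a.1 * u.1 + a.2.1 * u.2.1 + a.2.2 * u.2.2 = 0) : u ∈ closure (Mvar a) := by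
  have hlim : Tendsto (fun r : ℝ ↦ r • u) (𝓝[Ioo 0 1] 1) (𝓝 u) := by
    have hcont : Continuous fun r : ℝ ↦ r • u := by fun_prop
    exact (hcont.tendsto' 1 u (one_smul ℝ u)).mono_left nhdsWithin_le_nhds
  have : (𝓝[Ioo (0 : ℝ) 1] 1).NeBot := right_nhdsWithin_Ioo_neBot zero_lt_one
  exact mem_closure_of_tendsto hlim
    (eventually_mem_nhdsWithin.mono fun r hr ↦ smul_mem_Mvar hu h hr)

theorem closure_M_alpha_inter_torus_nonempty
    (α : ℂ × ℂ × ℂ) (hα : TriangleIneq α) :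
    (closure (Mvar α) ∩ triTorus).Nonempty := by
  obtain ⟨h₃, h₁, h₂⟩ := hα
  obtain ⟨u₁, u₂, u₃, hu₁, hu₂, hu₃, hsum⟩ :=
    exists_norm_eq_one_mul_add_mul_add_mul_eq_zero h₁.le h₂.le h₃.le
  have hu : (u₁, u₂, u₃) ∈ triTorus := ⟨hu₁, hu₂, hu₃⟩
  exact ⟨_, mem_closure_Mvar hu hsum, hu⟩
end

section
/- Let α = (α₁,α₂,α₃) ∈ ℂ³ satisfy the triangle inequality and let ζ ∈ clos(M_α) ∩ 𝕋³. Then ζ is a peak point: there exists a function f : clos(M_α) → ℂ, continuous on clos(M_α) and holomorphic on M_α (indeed the restriction of an entire function on ℂ³), such that f(ζ) = 1 and |f(w)| < 1 for every w ∈ clos(M_α) with w ≠ ζ. -/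
open Complex Set

/-!
The closed tridisc contains `clos(M_α)`, so it suffices to peak at a point `ζ` of `𝕋³` on the
closed tridisc. There `∏ᵢ (1 + conj ζᵢ zᵢ) / 2` does the job: for `‖u‖ = 1` the factor
`(1 + conj u z) / 2 = conj u · (u + z) / 2` has the modulus of the midpoint of `u` and `z`, which
by strict convexity of the closed disc is `< 1` unless `z = u`.
-/

open Metric

def PeaksAt {E : Type*} (f : E → ℂ) (K : Set E) (x : E) : Prop :=
  f x = 1 ∧ ∀ w ∈ K, w ≠ x → ‖f w‖ < 1

namespace PeaksAt

variable {E F : Type*} {f : E → ℂ} {g : F → ℂ} {s : Set E} {t : Set F} {x : E} {y : F}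

theorem norm_le_one (hf : PeaksAt f s x) {w : E} (hw : w ∈ s) : ‖f w‖ ≤ 1 := by
  rcases eq_or_ne w x with rfl | hne
  · simp [hf.1]
  · exact (hf.2 w hw hne).le

theorem prod (hf : PeaksAt f s x) (hg : PeaksAt g t y) :
    PeaksAt (fun p : E × F => f p.1 * g p.2) (s ×ˢ t) (x, y) := by
  refine ⟨by simp [hf.1, hg.1], fun w ⟨hw₁, hw₂⟩ hne => ?_⟩
  rw [norm_mul]
  have hf_le := hf.norm_le_one hw₁
  have hg_le := hg.norm_le_one hw₂
  by_cases hx : w.1 = x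
  · have hy : w.2 ≠ y := fun hy => hne (Prod.ext hx hy)
    exact mul_lt_one_of_nonneg_of_lt_one_right hf_le (norm_nonneg _) (hg.2 _ hw₂ hy)
  · exact mul_lt_one_of_nonneg_of_lt_one_left (norm_nonneg _) (hf.2 _ hw₁ hx) hg_le

end PeaksAt

noncomputable def peakFactor (u z : ℂ) : ℂ := (1 + starRingEnd ℂ u * z) / 2

@[fun_prop]
theorem differentiable_peakFactor (u : ℂ) : Differentiable ℂ (peakFactor u) := by
  unfold peakFactor
  fun_prop

theorem conj_mul_self_of_norm_eq_one {u : ℂ} (hu : ‖u‖ = 1) : starRingEnd ℂ u * u = 1 := by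
  rw [conj_mul', hu]
  norm_num

theorem peakFactor_self {u : ℂ} (hu : ‖u‖ = 1) : peakFactor u u = 1 := by
  rw [peakFactor, conj_mul_self_of_norm_eq_one hu]
  norm_num

theorem norm_peakFactor {u : ℂ} (hu : ‖u‖ = 1) (z : ℂ) :
    ‖peakFactor u z‖ = ‖(1 / 2 : ℝ) • u + (1 / 2 : ℝ) • z‖ := by
  have hfactor : peakFactor u z = starRingEnd ℂ u * ((1 / 2 : ℝ) • u + (1 / 2 : ℝ) • z) := by
    simp only [peakFactor, real_smul, ofReal_div, ofReal_one, ofReal_ofNat]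
    linear_combination (-1 / 2 : ℂ) * conj_mul_self_of_norm_eq_one hu
  rw [hfactor, norm_mul, norm_conj, hu, one_mul]

theorem peaksAt_peakFactor {u : ℂ} (hu : ‖u‖ = 1) : PeaksAt (peakFactor u) (closedBall 0 1) u :=
  ⟨peakFactor_self hu, fun z hz hne => by
    rw [norm_peakFactor hu]
    exact norm_combo_lt_of_ne hu.le (mem_closedBall_zero_iff.mp hz) hne.symm
      (by norm_num) (by norm_num) (by norm_num)⟩

theorem triDisc_eq_ball : triDisc = ball 0 1 := by
  ext z
  simp [triDisc, Prod.norm_def]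

theorem closure_Mvar_subset_closedBall (a : ℂ × ℂ × ℂ) : closure (Mvar a) ⊆ closedBall 0 1 :=
  (closure_mono fun _ hz => triDisc_eq_ball ▸ hz.1).trans closure_ball_subset_closedBall

theorem torus_points_are_peak_points_general
    (α : ℂ × ℂ × ℂ)
    (ζ : ℂ × ℂ × ℂ) (hζ : ζ ∈ closure (Mvar α) ∩ triTorus) :
    ∃ f : ℂ × ℂ × ℂ → ℂ, Differentiable ℂ f ∧ f ζ = 1 ∧
      ∀ w ∈ closure (Mvar α), w ≠ ζ → ‖f w‖ < 1 := by
  obtain ⟨-, hζ₁, hζ₂, hζ₃⟩ := hζ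
  have hpeak := (peaksAt_peakFactor hζ₁).prod
    ((peaksAt_peakFactor hζ₂).prod (peaksAt_peakFactor hζ₃))
  rw [closedBall_prod_same, closedBall_prod_same] at hpeak
  refine ⟨fun z => peakFactor ζ.1 z.1 * (peakFactor ζ.2.1 z.2.1 * peakFactor ζ.2.2 z.2.2),
    by fun_prop, hpeak.1, fun w hw hne => hpeak.2 w (closure_Mvar_subset_closedBall α hw) hne⟩

theorem torus_points_are_peak_points
    (α : ℂ × ℂ × ℂ) (hα : TriangleIneq α)
    (ζ : ℂ × ℂ × ℂ) (hζ : ζ ∈ closure (Mvar α) ∩ triTorus) :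
    ∃ f : ℂ × ℂ × ℂ → ℂ, Differentiable ℂ f ∧ f ζ = 1 ∧
      ∀ w ∈ closure (Mvar α), w ≠ ζ → ‖f w‖ < 1 :=
  torus_points_are_peak_points_general α ζ hζ
end
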